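/- If {A,B} is an irreducible pair with max(A) > max(B) and |A| + |B| > 2, then all elements of A and B are determined up to the bound: |A| ≤ max(B) < max(A), hence |A| < |B| is possible only when |B| ≤ max(A); in particular |A| + |B| < 2·max(A). -/
import Mathlib


/-- `{A,B}` is an irreducible pair: nonempty multisets of positive integers with equal
sums such that no nonempty proper submultisets `A' < A`, `B' < B` have equal sums. -/
def IrredPair (A B : Multiset ℕ) : Prop :=
  A ≠ 0 ∧ B ≠ 0 ∧ (∀ x ∈ A, 0 < x) ∧ (∀ x ∈ B, 0 < x) ∧
  A.sum = B.sum ∧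
  ∀ A' B' : Multiset ℕ, A' < A → B' < B → A' ≠ 0 → B' ≠ 0 → A'.sum ≠ B'.sum

/-- `{A,B}` is a `k`-irreducible pair: irreducible and all elements are at most `k`. -/
def KIrredPair (k : ℕ) (A B : Multiset ℕ) : Prop :=
  IrredPair A B ∧ (∀ x ∈ A, x ≤ k) ∧ (∀ x ∈ B, x ≤ k)

/-- Maximum element of a multiset of naturals (0 for the empty multiset). -/
def msetMax (S : Multiset ℕ) : ℕ := S.fold max 0

/-- A zero-sum multiset of integers is irreducible if it has no proper nonempty
zero-sum submultiset. -/
def IrredZeroSum (S : Multiset ℤ) : Prop :=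
  ¬ ∃ T : Multiset ℤ, T ≤ S ∧ T ≠ 0 ∧ T ≠ S ∧ T.sum = 0

lemma le_msetMax {x : ℕ} {S : Multiset ℕ} (h : x ∈ S) : x ≤ msetMax S :=
  Multiset.le_sup (α := ℕ) h

lemma sublist_mset_le {l₁ l₂ : List ℕ} (h : l₁.Sublist l₂) : (l₁ : Multiset ℕ) ≤ l₂ :=
  Multiset.coe_le.mpr h.subperm

lemma card_le_max (A B : Multiset ℕ) (h : IrredPair A B) :
    Multiset.card A ≤ msetMax B := by
  classical
  obtain ⟨hA0, hB0, hposA, hposB, hsum, hirr⟩ := h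
  set b := msetMax B with hbdef
  obtain ⟨y, hy⟩ := Multiset.exists_mem_of_ne_zero hB0
  have hb1 : 1 ≤ b := le_trans (hposB y hy) (le_msetMax hy)
  by_contra hcon
  push_neg at hcon
  set lA := A.toList with hlA
  set lB := B.toList with hlB
  have hAcoe : (lA : Multiset ℕ) = A := Multiset.coe_toList A
  have hBcoe : (lB : Multiset ℕ) = B := Multiset.coe_toList B
  set n := lA.length with hn
  set m := lB.length with hm
  have hcardA : Multiset.card A = n := by rw [← hAcoe, Multiset.coe_card]
  have hcardB : Multiset.card B = m := by rw [← hBcoe, Multiset.coe_card]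
  have hconn : b < n := by omega
  have hposlA : ∀ x ∈ lA, 0 < x := fun x hx => hposA x (by rwa [← hAcoe, Multiset.mem_coe])
  have hposlB : ∀ x ∈ lB, 0 < x := fun x hx => hposB x (by rwa [← hBcoe, Multiset.mem_coe])
  have hsuml : lA.sum = lB.sum := by
    have h1 : (lA : Multiset ℕ).sum = (lB : Multiset ℕ).sum := by rw [hAcoe, hBcoe]; exact hsum
    simpa using h1
  set S : ℕ → ℕ := fun i => (lA.take i).sum with hS
  set T : ℕ → ℕ := fun j => (lB.take j).sum with hT
  have hblockA : ∀ i k, S (i + k) = S i + ((lA.drop i).take k).sum := by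
    intro i k; simp only [hS]; rw [List.take_add, List.sum_append]
  have hblockB : ∀ j k, T (j + k) = T j + ((lB.drop j).take k).sum := by
    intro j k; simp only [hT]; rw [List.take_add, List.sum_append]
  have hposblockA : ∀ i k, i + k ≤ n → 1 ≤ k → 0 < ((lA.drop i).take k).sum := by
    intro i k hik hk
    apply List.sum_pos
    · intro x hx
      exact hposlA x (((( (lA.drop i).take_sublist k).trans (lA.drop_sublist i))).mem hx)
    · have hlen : ((lA.drop i).take k).length = k := by
        rw [List.length_take, List.length_drop]; omega
      intro hnil; rw [hnil] at hlen; simp at hlen; omega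
  have hSmono : ∀ i i', i < i' → i' ≤ n → S i < S i' := by
    intro i i' hii hi'
    have := hposblockA i (i' - i) (by omega) (by omega)
    have h2 := hblockA i (i' - i)
    rw [show i + (i' - i) = i' by omega] at h2
    omega
  have hTmono : ∀ j j', j ≤ j' → T j ≤ T j' := by
    intro j j' hjj
    have h2 := hblockB j (j' - j)
    rw [show j + (j' - j) = j' by omega] at h2
    omega
  have hSn : S n = lA.sum := by
    show (lA.take n).sum = lA.sum
    rw [hn, List.take_length]
  have hTm : T m = lB.sum := by
    show (lB.take m).sum = lB.sum
    rw [hm, List.take_length]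
  have hn2 : 2 ≤ n := by omega
  have hSpos : ∀ i, 1 ≤ i → i ≤ n → 0 < S i := by
    intro i h1 h2
    have h5 := hposblockA 0 i (by omega) h1
    rw [List.drop_zero] at h5
    exact h5
  have hSltsum : ∀ i, i < n → S i < lA.sum := by
    intro i hi
    have := hSmono i n hi le_rfl
    omega
  have hne : ∀ i jj, 1 ≤ i → i < n → 1 ≤ jj → jj < m → S i ≠ T jj := by
    intro i jj h1 h2 h3 h4 heq
    refine hirr (↑(lA.take i)) (↑(lB.take jj)) ?_ ?_ ?_ ?_ ?_
    · rw [← hAcoe]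
      refine lt_of_le_of_ne (sublist_mset_le (lA.take_sublist i)) ?_
      intro hc
      have h5 := congrArg Multiset.card hc
      rw [Multiset.coe_card, Multiset.coe_card, List.length_take] at h5
      omega
    · rw [← hBcoe]
      refine lt_of_le_of_ne (sublist_mset_le (lB.take_sublist jj)) ?_
      intro hc
      have h5 := congrArg Multiset.card hc
      rw [Multiset.coe_card, Multiset.coe_card, List.length_take] at h5
      omega
    · intro hc
      have h5 := congrArg Multiset.card hc
      rw [Multiset.coe_card, List.length_take, Multiset.card_zero] at h5
      omega
    · intro hc
      have h5 := congrArg Multiset.card hc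
      rw [Multiset.coe_card, List.length_take, Multiset.card_zero] at h5
      omega
    · rw [Multiset.sum_coe, Multiset.sum_coe]
      exact heq
  set jf : ℕ → ℕ := fun i => Nat.findGreatest (fun j => T j ≤ S i) m with hjf
  have hjf_le : ∀ i, T (jf i) ≤ S i :=
    fun i => Nat.findGreatest_spec (P := fun j => T j ≤ S i) (Nat.zero_le m)
      (by show (lB.take 0).sum ≤ S i; simp)
  have hjf_lt_m : ∀ i, i < n → jf i < m := by
    intro i hi
    rcases lt_or_ge (jf i) m with h | h
    · exact h
    · exfalso
      have h1 : jf i ≤ m := Nat.findGreatest_le m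
      have h2 : jf i = m := le_antisymm h1 h
      have h3 := hjf_le i
      rw [h2, hTm, ← hsuml] at h3
      exact absurd h3 (not_le.mpr (hSltsum i hi))
  have hjf_succ : ∀ i, i < n → S i < T (jf i + 1) := by
    intro i hi
    have h0 : ¬ (T (jf i + 1) ≤ S i) :=
      Nat.findGreatest_is_greatest (P := fun j => T j ≤ S i) (n := m) (k := jf i + 1)
        (Nat.lt_succ_self _) (hjf_lt_m i hi)
    omega
  have hjf_strict : ∀ i, 1 ≤ i → i < n → T (jf i) < S i := by
    intro i h1 h2
    rcases lt_or_eq_of_le (hjf_le i) with h | h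
    · exact h
    · exfalso
      rcases Nat.eq_zero_or_pos (jf i) with h0 | h0
      · rw [h0] at h
        have hT0 : T 0 = 0 := by show (lB.take 0).sum = 0; simp
        have := hSpos i h1 (by omega)
        omega
      · exact hne i (jf i) h1 h2 h0 (hjf_lt_m i h2) h.symm
  set f : ℕ → ℕ := fun i => S i - T (jf i) with hfdef
  have hf_mem : ∀ i ∈ Finset.Icc 1 (n - 1), f i ∈ Finset.Icc 1 (b - 1) := by
    intro i hi
    simp only [Finset.mem_Icc] at hi ⊢
    have hi2 : i < n := by omega
    have h1 := hjf_strict i hi.1 hi2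
    have h2 := hjf_succ i hi2
    have hjm := hjf_lt_m i hi2
    have hstep : T (jf i + 1) = T (jf i) + lB[jf i] := List.sum_take_succ lB (jf i) hjm
    have hmem : lB[jf i] ∈ lB := List.getElem_mem hjm
    have hle : lB[jf i] ≤ b := le_msetMax (by rwa [← hBcoe, Multiset.mem_coe])
    have hfi : f i = S i - T (jf i) := rfl
    omega
  have hcard : (Finset.Icc 1 (b - 1)).card < (Finset.Icc 1 (n - 1)).card := by
    rw [Nat.card_Icc, Nat.card_Icc]; omega
  obtain ⟨i, hi, i', hi', hne', hfeq⟩ :=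
    Finset.exists_ne_map_eq_of_card_lt_of_maps_to hcard hf_mem
  have key : ∀ p q, p ∈ Finset.Icc 1 (n-1) → q ∈ Finset.Icc 1 (n-1) → p < q → f p = f q → False := by
    intro p q hp hq hpq hfpq
    simp only [Finset.mem_Icc] at hp hq
    have hpn : p < n := by omega
    have hqn : q < n := by omega
    have hSp := hjf_strict p hp.1 hpn
    have hSq := hjf_strict q hq.1 hqn
    have hSpq : S p < S q := hSmono p q hpq (by omega)
    have hfp : f p = S p - T (jf p) := rfl
    have hfq : f q = S q - T (jf q) := rfl
    have hTpq : T (jf p) < T (jf q) := by omega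
    have hjpq : jf p < jf q := by
      by_contra hc
      push_neg at hc
      exact absurd (hTmono (jf q) (jf p) hc) (by omega)
    have hjqm : jf q < m := hjf_lt_m q hqn
    have hA' := hblockA p (q - p)
    rw [show p + (q - p) = q by omega] at hA'
    have hB' := hblockB (jf p) (jf q - jf p)
    rw [show jf p + (jf q - jf p) = jf q by omega] at hB'
    refine hirr (↑((lA.drop p).take (q - p))) (↑((lB.drop (jf p)).take (jf q - jf p)))
      ?_ ?_ ?_ ?_ ?_
    · rw [← hAcoe]
      refine lt_of_le_of_ne
        (sublist_mset_le (((lA.drop p).take_sublist _).trans (lA.drop_sublist p))) ?_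
      intro hc
      have h5 := congrArg Multiset.card hc
      rw [Multiset.coe_card, Multiset.coe_card, List.length_take, List.length_drop] at h5
      omega
    · rw [← hBcoe]
      refine lt_of_le_of_ne
        (sublist_mset_le (((lB.drop (jf p)).take_sublist _).trans (lB.drop_sublist _))) ?_
      intro hc
      have h5 := congrArg Multiset.card hc
      rw [Multiset.coe_card, Multiset.coe_card, List.length_take, List.length_drop] at h5
      omega
    · intro hc
      have h5 := congrArg Multiset.card hc
      rw [Multiset.coe_card, List.length_take, List.length_drop, Multiset.card_zero] at h5
      omega
    · intro hc
      have h5 := congrArg Multiset.card hc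
      rw [Multiset.coe_card, List.length_take, List.length_drop, Multiset.card_zero] at h5
      omega
    · rw [Multiset.sum_coe, Multiset.sum_coe]
      omega
  rcases lt_or_gt_of_ne hne' with h | h
  · exact key i i' hi hi' h hfeq
  · exact key i' i hi' hi h hfeq.symm

lemma IrredPair.symm {A B : Multiset ℕ} (h : IrredPair A B) : IrredPair B A := by
  obtain ⟨a, b, c, d, e, f⟩ := h
  exact ⟨b, a, d, c, e.symm, fun B' A' hB hA h1 h2 => (f A' B' hA hB h2 h1).symm⟩

theorem stmt18 (A B : Multiset ℕ) (h : IrredPair A B)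
    (hmax : msetMax B < msetMax A)
    (hlen : 2 < Multiset.card A + Multiset.card B) :
    Multiset.card A ≤ msetMax B ∧ Multiset.card B ≤ msetMax A ∧
    Multiset.card A + Multiset.card B < 2 * msetMax A := by
  have h1 := card_le_max A B h
  have h2 := card_le_max B A h.symm
  exact ⟨h1, h2, by omega⟩
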